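/- Fix a real number t > 0 and an integer 0 ≤ ℓ ≤ n−1, and let Θ : {z ∈ ℂ^n : q(z) = t} → {(u,v) ∈ ℝ^n × ℝ^n : ‖u‖ = 1, ⟨u,v⟩ = 0} be the map Θ(z) = (Re z / ‖Re z‖, Im z), a homeomorphism onto the tangent bundle of the (n−1)-sphere. Then Θ carries the intersection Q_ℓ ∩ {z : q(z) = t} bijectively onto the set {(u,v) : ‖u‖ = 1, u_j = 0 for all j ≤ ℓ, and v_j = 0 for all j > ℓ}, i.e. onto the conormal bundle of the equatorial subsphere S^{n−ℓ−1} = S^{n−1} ∩ {u_1 = ⋯ = u_ℓ = 0} inside the sphere. In particular, the intersection of the model Lagrangian ℓ-handle with a regular fiber of the model Lefschetz fibration is identified with a conormal bundle of a subsphere of the vanishing cycle. -/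

import Mathlib

open scoped BigOperators

noncomputable section

/-- The model Lefschetz singularity map `q(z) = Σ_j z_j²` on `ℂⁿ`. -/
def q (n : ℕ) (z : EuclideanSpace ℂ (Fin n)) : ℂ :=
  ∑ j : Fin n, (z j) ^ 2

/-- The componentwise real part of `z ∈ ℂⁿ`, a vector in `ℝⁿ`. -/
def reVec (n : ℕ) (z : EuclideanSpace ℂ (Fin n)) : EuclideanSpace ℝ (Fin n) :=
  WithLp.toLp 2 (fun j => (z j).re)

/-- The componentwise imaginary part of `z ∈ ℂⁿ`, a vector in `ℝⁿ`. -/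
def imVec (n : ℕ) (z : EuclideanSpace ℂ (Fin n)) : EuclideanSpace ℝ (Fin n) :=
  WithLp.toLp 2 (fun j => (z j).im)

/-- The model Lagrangian `ℓ`-handle `Q_ℓ ⊆ ℂⁿ`:
`Re z_j = 0` for `j ≤ ℓ` and `Im z_j = 0` for `j > ℓ` (in `1`-indexed notation). -/
def Qset (n l : ℕ) : Set (EuclideanSpace ℂ (Fin n)) :=
  {z | (∀ j : Fin n, (j : ℕ) < l → (z j).re = 0) ∧ (∀ j : Fin n, l ≤ (j : ℕ) → (z j).im = 0)}

/-!
On `Q_ℓ` every `z_j` is real or purely imaginary, so `Re z ⊥ Im z` and `q(z) = ‖Re z‖² - ‖Im z‖²`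
is real. Hence on the fiber `q = t` the norm of `Re z` is `√(t + ‖Im z‖²)`, which is positive for
`t > 0`, and `(u, v) ↦ √(t + ‖v‖²) u + i v` is an explicit inverse of `Θ`. The support conditions
defining `Q_ℓ` correspond exactly to the vanishing conditions on `u` and `v`.
-/

open Set
open scoped RealInnerProductSpace

lemma norm_smul_inv_norm_smul {E : Type*} [NormedAddCommGroup E] [NormedSpace ℝ E] (x : E) :
    ‖x‖ • ‖x‖⁻¹ • x = x := by
  rcases eq_or_ne x 0 with rfl | hx
  · simp
  · exact smul_inv_smul₀ (norm_ne_zero_iff.2 hx) x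

section

variable {n l : ℕ}

def ofReIm (x y : EuclideanSpace ℝ (Fin n)) : EuclideanSpace ℂ (Fin n) :=
  WithLp.toLp 2 fun j => ⟨x j, y j⟩

@[simp]
lemma reVec_ofReIm (x y : EuclideanSpace ℝ (Fin n)) : reVec n (ofReIm x y) = x := rfl

@[simp]
lemma imVec_ofReIm (x y : EuclideanSpace ℝ (Fin n)) : imVec n (ofReIm x y) = y := rfl

lemma ofReIm_reVec_imVec (z : EuclideanSpace ℂ (Fin n)) : ofReIm (reVec n z) (imVec n z) = z :=
  rfl

lemma q_eq (z : EuclideanSpace ℂ (Fin n)) :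
    q n z = ⟨‖reVec n z‖ ^ 2 - ‖imVec n z‖ ^ 2, 2 * ⟪reVec n z, imVec n z⟫⟩ := by
  simp only [q, EuclideanSpace.real_norm_sq_eq, PiLp.inner_apply, reVec, imVec]
  apply Complex.ext
  · simp [Complex.re_sum, sq, Finset.sum_sub_distrib]
  · rw [Complex.im_sum, Finset.mul_sum]
    refine Finset.sum_congr rfl fun j _ => ?_
    simp only [sq, Complex.mul_im, RCLike.inner_apply, conj_trivial]
    ring

lemma norm_reVec_sq_of_q_eq {t : ℝ} {z : EuclideanSpace ℂ (Fin n)} (hq : q n z = t) :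
    ‖reVec n z‖ ^ 2 = t + ‖imVec n z‖ ^ 2 := by
  have := congrArg Complex.re hq
  rw [q_eq] at this
  simp only [Complex.ofReal_re] at this
  linarith

lemma inner_reVec_imVec_of_mem_Qset {z : EuclideanSpace ℂ (Fin n)} (hz : z ∈ Qset n l) :
    ⟪reVec n z, imVec n z⟫ = 0 := by
  refine Finset.sum_eq_zero fun j _ => ?_
  rcases lt_or_ge (j : ℕ) l with hj | hj
  · simp [reVec, hz.1 j hj]
  · simp [imVec, hz.2 j hj]

lemma q_eq_of_mem_Qset {z : EuclideanSpace ℂ (Fin n)} (hz : z ∈ Qset n l) :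
    q n z = ((‖reVec n z‖ ^ 2 - ‖imVec n z‖ ^ 2 : ℝ) : ℂ) := by
  rw [q_eq, inner_reVec_imVec_of_mem_Qset hz, mul_zero]
  rfl

def fiberToTangent (n : ℕ) (z : EuclideanSpace ℂ (Fin n)) :
    EuclideanSpace ℝ (Fin n) × EuclideanSpace ℝ (Fin n) :=
  (‖reVec n z‖⁻¹ • reVec n z, imVec n z)

def tangentToFiber (t : ℝ) (w : EuclideanSpace ℝ (Fin n) × EuclideanSpace ℝ (Fin n)) :
    EuclideanSpace ℂ (Fin n) :=
  ofReIm (√(t + ‖w.2‖ ^ 2) • w.1) w.2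

def conormalSet (n l : ℕ) : Set (EuclideanSpace ℝ (Fin n) × EuclideanSpace ℝ (Fin n)) :=
  {w | ‖w.1‖ = 1 ∧ (∀ j : Fin n, (j : ℕ) < l → w.1 j = 0) ∧ (∀ j : Fin n, l ≤ (j : ℕ) → w.2 j = 0)}

lemma leftInvOn_tangentToFiber (t : ℝ) :
    LeftInvOn (tangentToFiber t) (fiberToTangent n) {z | q n z = t} := by
  intro z (hq : q n z = t)
  have hnorm : √(t + ‖imVec n z‖ ^ 2) = ‖reVec n z‖ := by
    rw [← norm_reVec_sq_of_q_eq hq, Real.sqrt_sq (norm_nonneg _)]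
  simp only [tangentToFiber, fiberToTangent, hnorm, norm_smul_inv_norm_smul, ofReIm_reVec_imVec]

lemma rightInvOn_tangentToFiber {t : ℝ} (ht : 0 < t) :
    RightInvOn (tangentToFiber t) (fiberToTangent n) {w | ‖w.1‖ = 1} := by
  rintro ⟨u, v⟩ (hu : ‖u‖ = 1)
  have hr : 0 < √(t + ‖v‖ ^ 2) := Real.sqrt_pos.2 (by positivity)
  simp [tangentToFiber, fiberToTangent, norm_smul, hu, abs_of_pos hr, smul_smul, hr.ne']

lemma mapsTo_fiberToTangent {t : ℝ} (ht : 0 < t) :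
    MapsTo (fiberToTangent n) (Qset n l ∩ {z | q n z = t}) (conormalSet n l) := by
  rintro z ⟨hz, hq : q n z = t⟩
  have hre : reVec n z ≠ 0 := by
    rw [← norm_ne_zero_iff, ← pow_ne_zero_iff two_ne_zero, norm_reVec_sq_of_q_eq hq]
    positivity
  refine ⟨norm_smul_inv_norm hre, fun j hj => ?_, hz.2⟩
  simp [fiberToTangent, reVec, hz.1 j hj]

lemma mapsTo_tangentToFiber {t : ℝ} (ht : 0 ≤ t) :
    MapsTo (tangentToFiber t) (conormalSet n l) (Qset n l ∩ {z | q n z = t}) := by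
  rintro ⟨u, v⟩ ⟨hu, hu0, hv0⟩
  have hz : tangentToFiber t (u, v) ∈ Qset n l :=
    ⟨fun j hj => mul_eq_zero_of_right _ (hu0 j hj), hv0⟩
  refine ⟨hz, ?_⟩
  rw [mem_ofPred_eq, q_eq_of_mem_Qset hz]
  simp [tangentToFiber, norm_smul, hu, Real.sq_sqrt (by positivity : 0 ≤ t + ‖v‖ ^ 2)]

end

theorem stmt_17_general (n l : ℕ) (t : ℝ) (ht : 0 < t) :
    Set.BijOn
      (fun z : EuclideanSpace ℂ (Fin n) => ((‖reVec n z‖)⁻¹ • reVec n z, imVec n z))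
      (Qset n l ∩ {z | q n z = (t : ℂ)})
      {w : EuclideanSpace ℝ (Fin n) × EuclideanSpace ℝ (Fin n) |
        ‖w.1‖ = 1 ∧ (∀ j : Fin n, (j : ℕ) < l → w.1 j = 0) ∧
        (∀ j : Fin n, l ≤ (j : ℕ) → w.2 j = 0)} := by
  have hinv : InvOn (tangentToFiber t) (fiberToTangent n) (Qset n l ∩ {z | q n z = t})
      (conormalSet n l) :=
    ⟨(leftInvOn_tangentToFiber t).mono inter_subset_right,
      (rightInvOn_tangentToFiber ht).mono fun _ hw => hw.1⟩
  exact hinv.bijOn (mapsTo_fiberToTangent ht) (mapsTo_tangentToFiber ht.le)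

/-- The map `Θ(z) = (Re z/‖Re z‖, Im z)` carries `Q_ℓ ∩ {q = t}` bijectively onto the
conormal bundle `{(u,v) : ‖u‖ = 1, u_j = 0 for j ≤ ℓ, v_j = 0 for j > ℓ}` of the
equatorial subsphere `S^{n−ℓ−1} ⊆ S^{n−1}`: the intersection of the model Lagrangian
`ℓ`-handle with a regular fiber is a conormal bundle of a subsphere of the vanishing
cycle. -/
theorem stmt_17 (n l : ℕ) (hn : 1 ≤ n) (hl : l ≤ n - 1) (t : ℝ) (ht : 0 < t) :
    Set.BijOn
      (fun z : EuclideanSpace ℂ (Fin n) => ((‖reVec n z‖)⁻¹ • reVec n z, imVec n z))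
      (Qset n l ∩ {z | q n z = (t : ℂ)})
      {w : EuclideanSpace ℝ (Fin n) × EuclideanSpace ℝ (Fin n) |
        ‖w.1‖ = 1 ∧ (∀ j : Fin n, (j : ℕ) < l → w.1 j = 0) ∧
        (∀ j : Fin n, l ≤ (j : ℕ) → w.2 j = 0)} :=
  stmt_17_general n l t ht
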